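/- Let TA = (L, L₀, L_u, Σ, CX, I, E) be a timed automaton and define g on states of TS(TA) by g((l,ν)) = (l_u, ν) if ν = ν₀ and ν₀ ⊭ I(l) (where l_u ∈ F_u is the fresh copy of l in PUR(TA)), and g((l,ν)) = (l,ν) otherwise. Then g is injective, and g maps the set of initial states of TS(TA) exactly onto the set of initial states of TS(PUR(TA)). -/
import Mathlib


/-!
Framework for timed automata.  Clock valuations assign non-negative reals to
clocks.  Guards and location invariants are represented semantically, as
predicates on clock valuations.
-/

/-- Clock valuations: each clock gets a non-negative real. -/
abbrev Val (C : Type) := C → NNReal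

/-- The valuation `ν₀` assigning `0` to every clock. -/
def zeroVal {C : Type} : Val C := fun _ => 0

open Classical in
/-- `ν[λ := 0]`: reset the clocks in `lam` to zero. -/
noncomputable def resetVal {C : Type} (ν : Val C) (lam : Set C) : Val C :=
  fun x => if x ∈ lam then 0 else ν x

/-- `ν + δ`: advance every clock by `δ`. -/
def shift {C : Type} (ν : Val C) (δ : NNReal) : Val C := fun x => ν x + δ

/-- A timed automaton `TA = (L, L₀, L_u, Σ, CX, I, E)` with location type `L`,
action alphabet `A` and clock type `C`:  a set of initial locations (nonempty),
a set of urgent locations, an invariant map, and a set of edges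
`(l, a, φ, λ, l')` consisting of source, action, guard, reset set and target. -/
structure TA (L A C : Type) where
  init : Set L
  init_nonempty : init.Nonempty
  urgent : Set L
  inv : L → Val C → Prop
  edges : Set (L × A × (Val C → Prop) × Set C × L)

/-- States of the associated transition systems: location/valuation pairs. -/
abbrev State (L C : Type) := L × Val C

/-- Initial states: initial locations paired with the zero valuation. -/
def TA.initStates {L A C : Type} (T : TA L A C) : Set (State L C) :=
  {p | p.1 ∈ T.init ∧ p.2 = zeroVal}

/-- Baseline semantics `TS(TA)`.  Labels are `Sum.inl a` for actions `a ∈ Σ`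
and `Sum.inr δ` for delays `δ ∈ ℝ≥0`.  Action transitions require the target
invariant to hold; delay transitions require the source location not to be
urgent and the invariant to hold throughout the delay. -/
def TS {L A C : Type} (T : TA L A C) :
    State L C → (A ⊕ NNReal) → State L C → Prop := fun p α q =>
  match α with
  | Sum.inl a => ∃ φ lam, (p.1, a, φ, lam, q.1) ∈ T.edges ∧ φ p.2 ∧
      q.2 = resetVal p.2 lam ∧ T.inv q.1 q.2
  | Sum.inr δ => p.1 ∉ T.urgent ∧ q.1 = p.1 ∧ q.2 = shift p.2 δ ∧
      ∀ k ≤ δ, T.inv p.1 (shift p.2 k)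

/-- Unsatisfied-invariants semantics `TS'(TA)`: like `TS(TA)` except action
transitions do not require the target invariant to hold. -/
def TS' {L A C : Type} (T : TA L A C) :
    State L C → (A ⊕ NNReal) → State L C → Prop := fun p α q =>
  match α with
  | Sum.inl a => ∃ φ lam, (p.1, a, φ, lam, q.1) ∈ T.edges ∧ φ p.2 ∧
      q.2 = resetVal p.2 lam
  | Sum.inr δ => p.1 ∉ T.urgent ∧ q.1 = p.1 ∧ q.2 = shift p.2 δ ∧
      ∀ k ≤ δ, T.inv p.1 (shift p.2 k)

/-- Reachable states: smallest set containing the initial states and closed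
under the transition relation. -/
inductive Reachable {S Λ : Type} (init : Set S) (tr : S → Λ → S → Prop) : S → Prop
  | base {s : S} : s ∈ init → Reachable init tr s
  | step {s : S} {α : Λ} {s' : S} :
      Reachable init tr s → tr s α s' → Reachable init tr s'

/-- The construction `PUR(TA)`.  Locations are `L ⊕ L`: `Sum.inl l` is the
original location `l`, and `Sum.inr l` for `l ∈ L_B = {l ∈ L₀ | ν₀ ⊭ I(l)}`
plays the role of the fresh urgent copy `l_u ∈ F_u`.  Initial locations are
`(L₀ - L_B) ∪ F_u`, urgent locations are `L_u ∪ F_u`, the invariant of each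
fresh copy is `true`, and the edges are the original ones together with copies
`(l_u, a, φ, λ, l'')` of each edge `(l, a, φ, λ, l'')` with `l ∈ L_B`. -/
noncomputable def PUR {L A C : Type} (T : TA L A C) : TA (L ⊕ L) A C where
  init := Sum.inl '' {l | l ∈ T.init ∧ T.inv l zeroVal} ∪
          Sum.inr '' {l | l ∈ T.init ∧ ¬ T.inv l zeroVal}
  init_nonempty := by
    obtain ⟨l, hl⟩ := T.init_nonempty
    by_cases h : T.inv l zeroVal
    · exact ⟨Sum.inl l, Set.mem_union_left _ (Set.mem_image_of_mem _ ⟨hl, h⟩)⟩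
    · exact ⟨Sum.inr l, Set.mem_union_right _ (Set.mem_image_of_mem _ ⟨hl, h⟩)⟩
  urgent := Sum.inl '' T.urgent ∪ Sum.inr '' {l | l ∈ T.init ∧ ¬ T.inv l zeroVal}
  inv := fun l' ν =>
    match l' with
    | Sum.inl l => T.inv l ν
    | Sum.inr _ => True
  edges := { e | ∃ l a φ lam l', (l, a, φ, lam, l') ∈ T.edges ∧
      (e = (Sum.inl l, a, φ, lam, Sum.inl l') ∨
       (l ∈ T.init ∧ ¬ T.inv l zeroVal ∧ e = (Sum.inr l, a, φ, lam, Sum.inl l'))) }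

open Classical in
/-- The map `g` on states: `g((l,ν)) = (l_u, ν)` if `ν = ν₀` and `ν₀ ⊭ I(l)`
(where `l_u ∈ F_u` is the fresh copy of `l`, which exists since then
`l ∈ L_B ⊆ L₀`), and `g((l,ν)) = (l,ν)` otherwise. -/
noncomputable def gPUR {L A C : Type} (T : TA L A C) :
    State L C → State (L ⊕ L) C := fun p =>
  if p.1 ∈ T.init ∧ p.2 = zeroVal ∧ ¬ T.inv p.1 zeroVal
  then (Sum.inr p.1, p.2) else (Sum.inl p.1, p.2)

/-- `g` is injective, and `g` maps the initial states of
`TS(TA)` exactly onto the initial states of `TS(PUR(TA))`. -/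
theorem statement_14 {L A C : Type} [Fintype L] [Fintype A] [Fintype C] [Nonempty C]
    (T : TA L A C) :
    (∀ (l l' : L) (ν ν' : Val C),
        gPUR T (l, ν) = gPUR T (l', ν') → l = l' ∧ ν = ν') ∧
    gPUR T '' T.initStates = (PUR T).initStates := by
  constructor
  · intro l l' ν ν' h
    unfold gPUR at h
    split_ifs at h with h1 h2 h2 <;>
      simp only [Prod.mk.injEq, Sum.inr.injEq, Sum.inl.injEq] at h <;>
      first
        | exact ⟨h.1, h.2⟩
        | exact absurd h.1 (by simp)
  · ext p
    constructor
    · rintro ⟨⟨l, ν⟩, ⟨hl, hν⟩, rfl⟩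
      simp only at hν; subst hν
      unfold gPUR TA.initStates PUR
      by_cases h : T.inv l zeroVal
      · simp [hl, h]
      · simp [hl, h]
    · rintro ⟨hinit, hν⟩
      obtain ⟨l', ν'⟩ := p
      simp only at hinit hν; subst hν
      unfold PUR at hinit
      rcases hinit with ⟨l, ⟨hl, hi⟩, rfl⟩ | ⟨l, ⟨hl, hi⟩, rfl⟩
      · exact ⟨(l, zeroVal), ⟨hl, rfl⟩, by unfold gPUR; simp [hi]⟩
      · exact ⟨(l, zeroVal), ⟨hl, rfl⟩, by unfold gPUR; simp [hl, hi]⟩
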